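/- Assume H1 and H2 hold. Then lim_{z→∞} (∫_z^∞ e^{γ(y)} (∫_y^∞ e^{-γ(ξ)} dξ)² dy) / (e^{2γ(z)} (∫_z^∞ e^{-γ(ξ)} dξ)³) = 1. -/

import Mathlib

/-!
Write `T z = ∫_z^∞ e^{-γ}` and `g = γ' = 2q`. Since `g → ∞`, `γ` grows at least linearly, so all
the tails are finite. L'Hôpital's rule comparing `T` with `e^{-γ}/g`, whose derivative is
`-e^{-γ} (1 + g'/g²)`, gives `g e^γ T → 1`; in particular `e^γ T → 0`, so `e^γ T² ≤ e^{-γ}`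
eventually. A second application of L'Hôpital's rule to the ratio, whose numerator and denominator
have derivatives `-e^γ T²` and `e^γ T² (2 g e^γ T - 3)`, yields the limit `-1 / (2 - 3) = 1`.
-/

open MeasureTheory Real Filter Set Asymptotics Topology

theorem hasDerivAt_integral_Ioi {f : ℝ → ℝ} {a z : ℝ} (hfi : IntegrableOn f (Ioi a))
    (hf : ContinuousAt f z) (haz : a < z) :
    HasDerivAt (fun w => ∫ x in Ioi w, f x) (-f z) z := by
  have hint : HasDerivAt (fun w => (∫ x in Ioi a, f x) - ∫ x in a..w, f x) (-f z) z :=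
    (intervalIntegral.integral_hasDerivAt_right
      ((intervalIntegrable_iff_integrableOn_Ioc_of_le haz.le).2
        (hfi.mono_set Ioc_subset_Ioi_self))
      (AEStronglyMeasurable.stronglyMeasurableAtFilter_of_mem hfi.aestronglyMeasurable
        (Ioi_mem_nhds haz))
      hf).const_sub _
  refine hint.congr_of_eventuallyEq ?_
  filter_upwards [Ioi_mem_nhds haz] with w hw
  rw [← intervalIntegral.integral_Ioi_sub_Ioi hfi (le_of_lt hw), sub_sub_cancel]

theorem exists_eventually_add_le_of_hasDerivAt {γ g : ℝ → ℝ} (hγ : ∀ x, HasDerivAt γ (g x) x)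
    (hg : Tendsto g atTop atTop) : ∃ C, ∀ᶠ x in atTop, x + C ≤ γ x := by
  obtain ⟨M, hM⟩ := eventually_atTop.1 (hg.eventually_ge_atTop 1)
  have hslope := (convex_Ici M).mul_sub_le_image_sub_of_le_deriv
    (fun x _ => (hγ x).continuousAt.continuousWithinAt)
    (fun x _ => (hγ x).differentiableAt.differentiableWithinAt)
    (C := 1) (fun x hx => (hγ x).deriv ▸ hM x (interior_subset hx))
  refine ⟨γ M - M, eventually_atTop.2 ⟨M, fun x hx => ?_⟩⟩
  linarith [hslope M self_mem_Ici x hx hx]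

theorem tendsto_atTop_of_hasDerivAt {γ g : ℝ → ℝ} (hγ : ∀ x, HasDerivAt γ (g x) x)
    (hg : Tendsto g atTop atTop) : Tendsto γ atTop atTop := by
  obtain ⟨C, hC⟩ := exists_eventually_add_le_of_hasDerivAt hγ hg
  exact tendsto_atTop_mono' atTop hC (tendsto_atTop_add_const_right _ C tendsto_id)

theorem integrableOn_Ioi_exp_neg_of_hasDerivAt {γ g : ℝ → ℝ} (hγ : ∀ x, HasDerivAt γ (g x) x)
    (hg : Tendsto g atTop atTop) (a : ℝ) : IntegrableOn (fun x => exp (-γ x)) (Ioi a) := by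
  obtain ⟨C, hC⟩ := exists_eventually_add_le_of_hasDerivAt hγ hg
  have hγc : Continuous γ := continuous_iff_continuousAt.2 fun x => (hγ x).continuousAt
  refine integrable_of_isBigO_exp_neg one_pos (by fun_prop) (IsBigO.of_bound (exp (-C)) ?_)
  filter_upwards [hC] with x hx
  rw [norm_of_nonneg (exp_pos _).le, norm_of_nonneg (exp_pos _).le, ← exp_add]
  exact exp_le_exp.2 (by linarith)

theorem integrableOn_Ioi_exp_mul_sq {γ T : ℝ → ℝ} {a : ℝ} (hγ : Continuous γ)
    (hT : Continuous T) (hint : IntegrableOn (fun x => exp (-γ x)) (Ioi a))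
    (hET : Tendsto (fun x => exp (γ x) * T x) atTop (𝓝 0)) :
    IntegrableOn (fun x => exp (γ x) * T x ^ 2) (Ioi a) := by
  have hO : (fun x => exp (γ x) * T x ^ 2) =O[atTop] fun x => exp (-γ x) := by
    refine (((hET.pow 2).isBigO_one ℝ).mul (isBigO_refl (fun x => exp (-γ x)) atTop)).congr
      (fun x => ?_) (fun x => one_mul _)
    rw [exp_neg]
    field_simp
  rw [← integrableOn_Ici_iff_integrableOn_Ioi]
  exact (ContinuousOn.locallyIntegrableOn (by fun_prop) measurableSet_Ici)
    |>.integrableOn_of_isBigO_atTop hO ⟨Ioi a, Ioi_mem_atTop a, hint⟩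

theorem tendsto_mul_exp_mul_of_hasDerivAt_neg_exp_neg {γ g g' T : ℝ → ℝ}
    (hγ : ∀ x, HasDerivAt γ (g x) x) (hg : ∀ x, HasDerivAt g (g' x) x)
    (hg_top : Tendsto g atTop atTop) (hg' : Tendsto (fun x => g' x / g x ^ 2) atTop (𝓝 0))
    (hT : ∀ᶠ x in atTop, HasDerivAt T (-exp (-γ x)) x) (hT0 : Tendsto T atTop (𝓝 0)) :
    Tendsto (fun x => g x * exp (γ x) * T x) atTop (𝓝 1) := by
  have hg_ne : ∀ᶠ x in atTop, g x ≠ 0 := hg_top.eventually_ne_atTop 0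
  have hG : ∀ᶠ x in atTop, HasDerivAt (fun w => exp (-γ w) / g w)
      (-exp (-γ x) * (1 + g' x / g x ^ 2)) x := by
    filter_upwards [hg_ne] with x hx
    refine (((hγ x).neg.exp).div (hg x) hx).congr_deriv ?_
    simp only [Pi.neg_apply]
    field_simp
    ring
  have hG0 : Tendsto (fun x => exp (-γ x) / g x) atTop (𝓝 0) := by
    simpa using (tendsto_exp_atBot.comp
      (tendsto_neg_atTop_atBot.comp (tendsto_atTop_of_hasDerivAt hγ hg_top))).div_atTop hg_top
  have hlim : Tendsto (fun x => 1 + g' x / g x ^ 2) atTop (𝓝 1) := by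
    simpa using hg'.const_add 1
  -- L'Hôpital's rule against `exp (-γ) / g`, the leading term of the tail `T`.
  have hTG := HasDerivAt.lhopital_zero_atTop hT hG
    (hlim.eventually_ne one_ne_zero |>.mono fun x hx => mul_ne_zero (by simp [exp_ne_zero]) hx)
    hT0 hG0 ((hlim.inv₀ one_ne_zero).congr fun x =>
      (div_mul_cancel_left₀ (neg_ne_zero.2 (exp_ne_zero _)) _).symm)
  rw [inv_one] at hTG
  refine hTG.congr' ?_
  filter_upwards [hg_ne] with x hx
  rw [exp_neg]
  field_simp

theorem hasDerivAt_exp_two_mul_mul_pow_three {γ g T : ℝ → ℝ} {x : ℝ}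
    (hγ : HasDerivAt γ (g x) x) (hT : HasDerivAt T (-exp (-γ x)) x) :
    HasDerivAt (fun w => exp (2 * γ w) * T w ^ 3)
      (exp (γ x) * T x ^ 2 * (2 * (g x * exp (γ x) * T x) - 3)) x := by
  refine ((hγ.const_mul 2).exp.mul (hT.pow 3)).congr_deriv ?_
  have hexp : exp (2 * γ x) = exp (γ x) * exp (γ x) := by rw [two_mul, exp_add]
  have hinv : exp (γ x) * exp (-γ x) = 1 := by rw [← exp_add, add_neg_cancel, exp_zero]
  simp only [hexp, Pi.pow_apply, Nat.cast_ofNat]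
  linear_combination (-3 * exp (γ x) * T x ^ 2) * hinv

theorem tendsto_div_exp_two_mul_mul_pow_three {γ g T N : ℝ → ℝ}
    (hγ : ∀ x, HasDerivAt γ (g x) x)
    (hT : ∀ᶠ x in atTop, HasDerivAt T (-exp (-γ x)) x) (hT0 : Tendsto T atTop (𝓝 0))
    (hT_ne : ∀ᶠ x in atTop, T x ≠ 0)
    (hu : Tendsto (fun x => g x * exp (γ x) * T x) atTop (𝓝 1))
    (hET : Tendsto (fun x => exp (γ x) * T x) atTop (𝓝 0))
    (hN : ∀ᶠ x in atTop, HasDerivAt N (-(exp (γ x) * T x ^ 2)) x) (hN0 : Tendsto N atTop (𝓝 0)) :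
    Tendsto (fun x => N x / (exp (2 * γ x) * T x ^ 3)) atTop (𝓝 1) := by
  have hD0 : Tendsto (fun x => exp (2 * γ x) * T x ^ 3) atTop (𝓝 0) := by
    simpa [two_mul, exp_add] using ((hET.mul hET).mul hT0).congr fun x => by ring
  have hfactor : Tendsto (fun x => 2 * (g x * exp (γ x) * T x) - 3) atTop (𝓝 (-1)) := by
    convert (hu.const_mul 2).sub_const 3 using 2
    norm_num
  have hD : ∀ᶠ x in atTop, HasDerivAt (fun w => exp (2 * γ w) * T w ^ 3)
      (exp (γ x) * T x ^ 2 * (2 * (g x * exp (γ x) * T x) - 3)) x := by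
    filter_upwards [hT] with x hx using hasDerivAt_exp_two_mul_mul_pow_three (hγ x) hx
  have hfactor_ne := hfactor.eventually_ne (by norm_num : (-1 : ℝ) ≠ 0)
  refine HasDerivAt.lhopital_zero_atTop hN hD ?_ hN0 hD0 ?_
  · filter_upwards [hT_ne, hfactor_ne] with x hx hx'
    exact mul_ne_zero (mul_ne_zero (exp_ne_zero _) (pow_ne_zero 2 hx)) hx'
  · refine (by simpa using (hfactor.inv₀ (by norm_num)).neg :
      Tendsto (fun x => -(2 * (g x * exp (γ x) * T x) - 3)⁻¹) atTop (𝓝 1)).congr' ?_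
    filter_upwards [hT_ne] with x hx
    rw [neg_div, div_mul_cancel_left₀ (mul_ne_zero (exp_ne_zero _) (pow_ne_zero 2 hx))]

theorem tendsto_tail_square_ratio_of_hasDerivAt {γ g g' : ℝ → ℝ}
    (hγ : ∀ x, HasDerivAt γ (g x) x) (hg : ∀ x, HasDerivAt g (g' x) x)
    (hg_top : Tendsto g atTop atTop) (hg' : Tendsto (fun x => g' x / g x ^ 2) atTop (𝓝 0)) :
    Tendsto (fun z => (∫ y in Ioi z, exp (γ y) * (∫ ξ in Ioi y, exp (-γ ξ)) ^ 2) /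
      (exp (2 * γ z) * (∫ ξ in Ioi z, exp (-γ ξ)) ^ 3)) atTop (𝓝 1) := by
  set T : ℝ → ℝ := fun z => ∫ ξ in Ioi z, exp (-γ ξ)
  have hint := integrableOn_Ioi_exp_neg_of_hasDerivAt hγ hg_top
  have hγc : Continuous γ := continuous_iff_continuousAt.2 fun x => (hγ x).continuousAt
  have hT : ∀ x, HasDerivAt T (-exp (-γ x)) x := fun x =>
    hasDerivAt_integral_Ioi (hint (x - 1)) (by fun_prop) (by linarith)
  have hTc : Continuous T := continuous_iff_continuousAt.2 fun x => (hT x).continuousAt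
  have hT0 : Tendsto T atTop (𝓝 0) := tendsto_integral_Ioi_zero tendsto_id
  have hT_pos : ∀ x, 0 < T x := fun x =>
    have : NeZero (volume.restrict (Ioi x)) := ⟨by simp⟩
    integral_exp_pos (hint x)
  have hu := tendsto_mul_exp_mul_of_hasDerivAt_neg_exp_neg hγ hg hg_top hg' (.of_forall hT) hT0
  have hET : Tendsto (fun x => exp (γ x) * T x) atTop (𝓝 0) := by
    refine (hu.div_atTop hg_top).congr' ?_
    filter_upwards [hg_top.eventually_ne_atTop 0] with x hx
    field_simp
  have hN_int := integrableOn_Ioi_exp_mul_sq (a := 0) hγc hTc (hint 0) hET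
  refine tendsto_div_exp_two_mul_mul_pow_three hγ (.of_forall hT) hT0
    (.of_forall fun x => (hT_pos x).ne') hu hET ?_ (tendsto_integral_Ioi_zero tendsto_id)
  filter_upwards [eventually_gt_atTop 0] with x hx
  exact hasDerivAt_integral_Ioi hN_int
    (by fun_prop : Continuous fun y => exp (γ y) * T y ^ 2).continuousAt hx

theorem tail_square_ratio_tendsto_one_general
    (q γ : ℝ → ℝ)
    (hq : ContDiff ℝ 1 q)
    (hγ : ∀ y, γ y = 2 * ∫ t in (0:ℝ)..y, q t)
    (H2a : Tendsto q atTop atTop)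
    (H2b : Tendsto (fun x => deriv q x / q x ^ 2) atTop (nhds 0)) :
    Tendsto
      (fun z =>
        (∫ y in Set.Ioi z,
            Real.exp (γ y) * (∫ ξ in Set.Ioi y, Real.exp (-(γ ξ))) ^ 2) /
          (Real.exp (2 * γ z) * (∫ ξ in Set.Ioi z, Real.exp (-(γ ξ))) ^ 3))
      atTop (nhds 1) := by
  have hγ' : ∀ x, HasDerivAt γ (2 * q x) x := fun x => by
    rw [show γ = fun y => 2 * ∫ t in (0:ℝ)..y, q t from funext hγ]
    exact (hq.continuous.integral_hasStrictDerivAt 0 x).hasDerivAt.const_mul 2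
  have hq' : ∀ x, HasDerivAt (fun x => 2 * q x) (2 * deriv q x) x := fun x =>
    ((hq.differentiable one_ne_zero x).hasDerivAt).const_mul 2
  refine tendsto_tail_square_ratio_of_hasDerivAt hγ' hq' (H2a.const_mul_atTop two_pos) ?_
  simpa using (H2b.div_const 2).congr fun x => by ring

/-- Under H1 and H2,
(∫_z^∞ e^{γ(y)} (∫_y^∞ e^{-γ(ξ)} dξ)² dy) / (e^{2γ(z)} (∫_z^∞ e^{-γ(ξ)} dξ)³) → 1. -/
theorem tail_square_ratio_tendsto_one
    (q γ : ℝ → ℝ)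
    (hq : ContDiff ℝ 1 q)
    (hγ : ∀ y, γ y = 2 * ∫ t in (0:ℝ)..y, q t)
    (H1 : ∫⁻ y in Set.Ioi (0:ℝ),
        ENNReal.ofReal (Real.exp (γ y)) *
          ∫⁻ z in Set.Ioi y, ENNReal.ofReal (Real.exp (-(γ z))) < ⊤)
    (H2a : Tendsto q atTop atTop)
    (H2b : Tendsto (fun x => deriv q x / q x ^ 2) atTop (nhds 0)) :
    Tendsto
      (fun z =>
        (∫ y in Set.Ioi z,
            Real.exp (γ y) * (∫ ξ in Set.Ioi y, Real.exp (-(γ ξ))) ^ 2) /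
          (Real.exp (2 * γ z) * (∫ ξ in Set.Ioi z, Real.exp (-(γ ξ))) ^ 3))
      atTop (nhds 1) :=
  tail_square_ratio_tendsto_one_general q γ hq hγ H2a H2b
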